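/- Let r > 0, v > 0 and Δ > 1 + r be real numbers, and define 𝓛(f) = v·f·(1+r)·(2Δ − (r+2)·√(1+f))/Δ for f ≥ 0. Then there exists a threshold f̄ > 0 such that 𝓛 is strictly increasing on the interval [0, f̄] and strictly decreasing on the interval [f̄, ∞). -/

import Mathlib

/-!
Substituting `s = √(1 + f)` turns the yield into `v (1 + r) / Δ · (s² - 1)(2Δ - (r + 2) s)`,
a positive multiple of a cubic in `s`. The derivative of the cubic `(s² - 1)(2Δ - a s)` is the
concave quadratic `-3a s² + 4Δ s + a`, which is positive at `0` and so changes sign exactly once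
on `[0, ∞)`, at `s̄ = (2Δ + √(4Δ² + 3a²)) / (3a)`. The hypothesis `Δ > 1 + r` makes the
derivative positive at `s = 1`, so `s̄ > 1` and the threshold is `f̄ = s̄² - 1 > 0`.
-/

open Set

namespace LiquidityYield

def yieldCubic (a Δ s : ℝ) : ℝ := (s ^ 2 - 1) * (2 * Δ - a * s)

noncomputable def yieldPeak (a Δ : ℝ) : ℝ := (2 * Δ + √(4 * Δ ^ 2 + 3 * a ^ 2)) / (3 * a)

variable {a Δ s : ℝ}

theorem hasDerivAt_yieldCubic (a Δ s : ℝ) :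
    HasDerivAt (yieldCubic a Δ) (-3 * a * s ^ 2 + 4 * Δ * s + a) s := by
  have h₁ : HasDerivAt (fun x : ℝ => x ^ 2 - 1) (2 * s) s := by
    simpa using (hasDerivAt_pow 2 s).sub_const 1
  have h₂ : HasDerivAt (fun x : ℝ => 2 * Δ - a * x) (-a) s := by
    simpa using ((hasDerivAt_id s).const_mul a).const_sub (2 * Δ)
  exact (h₁.mul h₂).congr_deriv (by ring)

theorem abs_two_mul_lt_sqrt (ha : a ≠ 0) : |2 * Δ| < √(4 * Δ ^ 2 + 3 * a ^ 2) := by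
  rw [Real.lt_sqrt (abs_nonneg _), sq_abs]
  nlinarith [sq_pos_of_ne_zero ha]

theorem three_mul_mul_yieldCubic_deriv_eq (a Δ s : ℝ) :
    3 * a * (-3 * a * s ^ 2 + 4 * Δ * s + a) =
      (2 * Δ + √(4 * Δ ^ 2 + 3 * a ^ 2) - 3 * a * s) *
        (3 * a * s - 2 * Δ + √(4 * Δ ^ 2 + 3 * a ^ 2)) := by
  have hw := Real.sq_sqrt (by positivity : (0 : ℝ) ≤ 4 * Δ ^ 2 + 3 * a ^ 2)
  linear_combination -hw

theorem yieldPeak_pos (ha : 0 < a) : 0 < yieldPeak a Δ := by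
  have := (abs_two_mul_lt_sqrt (Δ := Δ) ha.ne').trans_le' (neg_le_abs _)
  exact div_pos (by linarith) (by positivity)

theorem one_lt_yieldPeak (ha : 0 < a) (h : a < 2 * Δ) : 1 < yieldPeak a Δ := by
  have hw : 2 * a < √(4 * Δ ^ 2 + 3 * a ^ 2) := by
    rw [Real.lt_sqrt (by positivity)]
    nlinarith
  rw [yieldPeak, one_lt_div (by positivity)]
  linarith

theorem yieldCubic_deriv_pos_of_lt_yieldPeak (ha : 0 < a) (hs₀ : 0 ≤ s) (hs : s < yieldPeak a Δ) :
    0 < -3 * a * s ^ 2 + 4 * Δ * s + a := by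
  rw [yieldPeak, lt_div_iff₀ (by positivity)] at hs
  have hw := (abs_two_mul_lt_sqrt (Δ := Δ) ha.ne').trans_le' (le_abs_self _)
  have key := three_mul_mul_yieldCubic_deriv_eq a Δ s
  refine pos_of_mul_pos_right (a := 3 * a) ?_ (by positivity)
  rw [key]
  refine mul_pos ?_ ?_
  · linarith
  · nlinarith

theorem yieldCubic_deriv_neg_of_yieldPeak_lt (ha : 0 < a) (hs : yieldPeak a Δ < s) :
    -3 * a * s ^ 2 + 4 * Δ * s + a < 0 := by
  have hs₀ := (yieldPeak_pos (Δ := Δ) ha).trans hs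
  rw [yieldPeak, div_lt_iff₀ (by positivity)] at hs
  have hw := (abs_two_mul_lt_sqrt (Δ := Δ) ha.ne').trans_le' (le_abs_self _)
  have key := three_mul_mul_yieldCubic_deriv_eq a Δ s
  refine neg_of_mul_neg_right (a := 3 * a) ?_ (by positivity)
  rw [key]
  refine mul_neg_of_neg_of_pos ?_ ?_
  · linarith
  · nlinarith

theorem continuous_yieldCubic (a Δ : ℝ) : Continuous (yieldCubic a Δ) := by
  unfold yieldCubic
  fun_prop

theorem strictMonoOn_yieldCubic (ha : 0 < a) :
    StrictMonoOn (yieldCubic a Δ) (Icc 0 (yieldPeak a Δ)) := by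
  refine strictMonoOn_of_deriv_pos (convex_Icc _ _) (continuous_yieldCubic a Δ).continuousOn ?_
  intro s hs
  rw [interior_Icc] at hs
  rw [(hasDerivAt_yieldCubic a Δ s).deriv]
  exact yieldCubic_deriv_pos_of_lt_yieldPeak ha hs.1.le hs.2

theorem strictAntiOn_yieldCubic (ha : 0 < a) :
    StrictAntiOn (yieldCubic a Δ) (Ici (yieldPeak a Δ)) := by
  refine strictAntiOn_of_deriv_neg (convex_Ici _) (continuous_yieldCubic a Δ).continuousOn ?_
  intro s hs
  rw [interior_Ici] at hs
  rw [(hasDerivAt_yieldCubic a Δ s).deriv]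
  exact yieldCubic_deriv_neg_of_yieldPeak_lt ha hs

end LiquidityYield

open LiquidityYield

theorem strictMonoOn_sqrt_one_add : StrictMonoOn (fun f : ℝ => √(1 + f)) (Ici (-1)) :=
  fun f (hf : -1 ≤ f) _ _ hfg => Real.sqrt_lt_sqrt (by linarith) (by linarith)

theorem mapsTo_sqrt_one_add_Icc {p : ℝ} (hp : 0 ≤ p) :
    MapsTo (fun f : ℝ => √(1 + f)) (Icc 0 (p ^ 2 - 1)) (Icc 0 p) := fun f hf =>
  ⟨Real.sqrt_nonneg _, Real.sqrt_le_iff.2 ⟨hp, by linarith [hf.2]⟩⟩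

theorem mapsTo_sqrt_one_add_Ici (p : ℝ) :
    MapsTo (fun f : ℝ => √(1 + f)) (Ici (p ^ 2 - 1)) (Ici p) := fun f (hf : p ^ 2 - 1 ≤ f) =>
  Real.le_sqrt_of_sq_le (by linarith)

theorem eqOn_yield_yieldCubic (r v Δ : ℝ) :
    EqOn ((v * (1 + r) / Δ * ·) ∘ yieldCubic (r + 2) Δ ∘ fun f => √(1 + f))
      (fun f : ℝ => v * f * (1 + r) * (2 * Δ - (r + 2) * Real.sqrt (1 + f)) / Δ) (Ici (-1)) := by
  intro f (hf : -1 ≤ f)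
  simp only [Function.comp, yieldCubic, Real.sq_sqrt (by linarith : (0 : ℝ) ≤ 1 + f)]
  ring

theorem liquidity_yield_increasing_then_decreasing
    (r v Δ : ℝ) (hr : 0 < r) (hv : 0 < v) (hΔ : 1 + r < Δ) :
    ∃ fbar : ℝ, 0 < fbar ∧
      StrictMonoOn (fun f : ℝ => v * f * (1 + r) * (2 * Δ - (r + 2) * Real.sqrt (1 + f)) / Δ)
        (Set.Icc 0 fbar) ∧
      StrictAntiOn (fun f : ℝ => v * f * (1 + r) * (2 * Δ - (r + 2) * Real.sqrt (1 + f)) / Δ)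
        (Set.Ici fbar) := by
  have ha : 0 < r + 2 := by linarith
  have hΔ₀ : 0 < Δ := by linarith
  have hp : 1 < yieldPeak (r + 2) Δ := one_lt_yieldPeak ha (by linarith)
  have hscale := strictMono_mul_left_of_pos (by positivity : 0 < v * (1 + r) / Δ)
  have hIcc : Icc 0 (yieldPeak (r + 2) Δ ^ 2 - 1) ⊆ Ici (-1) :=
    Icc_subset_Ici_self.trans (Ici_subset_Ici.2 (by norm_num))
  have hIci : Ici (yieldPeak (r + 2) Δ ^ 2 - 1) ⊆ Ici (-1) := Ici_subset_Ici.2 (by nlinarith)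
  refine ⟨yieldPeak (r + 2) Δ ^ 2 - 1, by nlinarith, ?_, ?_⟩
  · exact (hscale.comp_strictMonoOn <| (strictMonoOn_yieldCubic ha).comp
      (strictMonoOn_sqrt_one_add.mono hIcc) (mapsTo_sqrt_one_add_Icc (by linarith))).congr
      ((eqOn_yield_yieldCubic r v Δ).mono hIcc)
  · exact (hscale.comp_strictAntiOn <| (strictAntiOn_yieldCubic ha).comp_strictMonoOn
      (strictMonoOn_sqrt_one_add.mono hIci) (mapsTo_sqrt_one_add_Ici _)).congr
      ((eqOn_yield_yieldCubic r v Δ).mono hIci)
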